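/- For every integer p ≥ 1, setting a = 2^p, one has β_b(C(2a;1,a)) = α(C(2a;1,a)) = a − 1. -/

import Mathlib

/-- The eccentricity of a vertex: maximum distance to any other vertex. -/
noncomputable def eccent {V : Type*} [Fintype V] (G : SimpleGraph V) (v : V) : ℕ :=
  Finset.univ.sup (fun u => G.dist v u)

/-- The diameter of a finite graph: maximum eccentricity. -/
noncomputable def graphDiam {V : Type*} [Fintype V] (G : SimpleGraph V) : ℕ :=
  Finset.univ.sup (fun v => eccent G v)

/-- `f` is an independent broadcast on `G`. -/
def IsIndepBroadcast {V : Type*} [Fintype V] (G : SimpleGraph V) (f : V → ℕ) : Prop :=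
  (∀ v, f v ≤ eccent G v) ∧
  ∀ u v : V, u ≠ v → 0 < f u → 0 < f v → max (f u) (f v) < G.dist u v

/-- The broadcast independence number: maximum cost of an independent broadcast. -/
noncomputable def betaB {V : Type*} [Fintype V] (G : SimpleGraph V) : ℕ :=
  sSup {k | ∃ f : V → ℕ, IsIndepBroadcast G f ∧ ∑ v, f v = k}

/-- The independence number: maximum size of an independent set. -/
noncomputable def alphaNum {V : Type*} [Fintype V] (G : SimpleGraph V) : ℕ :=
  sSup {k | ∃ s : Finset V, (∀ u ∈ s, ∀ v ∈ s, ¬ G.Adj u v) ∧ s.card = k}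

/-- The circulant graph `C(n;1,a)` on vertices `v_0,…,v_{n-1}` with edges
`v_i v_{i+1}` and `v_i v_{i+a}`, indices mod `n`. -/
def circulantGraph (n a : ℕ) : SimpleGraph (Fin n) :=
  SimpleGraph.fromRel (fun i j => (i.val + 1) % n = j.val ∨ (i.val + a) % n = j.val)

/-!
Project the vertices of `C(2a;1,a)` to `ZMod a` by `u ↦ u mod a`. Both `u + c` and `u + c + a`
are within distance `c + 1` of `u`, so an independent broadcast `f` occupies pairwise disjoint
arcs `[u, u + f u)` of `ZMod a`, and its cost is at most `a`. If the cost were `a`, the arcs would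
tile `ZMod a`, and the arc following that of `u` would belong to `u + f u + a`, with strength at
most `f u`. Starting from a vertex of least positive strength `γ`, all the vertices
`u + k (γ + a)` then carry strength `γ`. When `a = 2 ^ p` and `γ < a`, some `k` makes
`k (γ + a) ≡ a [MOD 2a]`, so two adjacent vertices `u` and `u + a` both broadcast.

The even vertices below `a` together with the odd vertices strictly between `a` and `2a - 1`
form an independent set of size `a - 1`.
-/

open Finset Fin.NatCast Fin.CommRing

section Broadcast

variable {V : Type*} [Fintype V] {G : SimpleGraph V}

lemma one_le_eccent [Nontrivial V] (hG : G.Connected) (v : V) : 1 ≤ eccent G v := by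
  obtain ⟨w, hw⟩ := exists_ne v
  exact (hG.pos_dist_of_ne hw.symm).trans_le (le_sup (f := fun u => G.dist v u) (mem_univ w))

lemma IsIndepBroadcast.eq_zero_or_eq_zero_of_adj {f : V → ℕ} (hf : IsIndepBroadcast G f)
    {u v : V} (h : G.Adj u v) : f u = 0 ∨ f v = 0 := by
  by_contra! hpos
  have := hf.2 u v h.ne (Nat.pos_of_ne_zero hpos.1) (Nat.pos_of_ne_zero hpos.2)
  rw [SimpleGraph.dist_eq_one_iff_adj.2 h] at this
  omega

lemma isIndepBroadcast_indicator [DecidableEq V] [Nontrivial V] (hG : G.Connected)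
    {s : Finset V} (hs : ∀ u ∈ s, ∀ v ∈ s, ¬ G.Adj u v) :
    IsIndepBroadcast G (fun v => if v ∈ s then 1 else 0) := by
  refine ⟨fun v => ?_, fun u v huv hu hv => ?_⟩
  · dsimp only
    split_ifs
    exacts [one_le_eccent hG v, Nat.zero_le _]
  · have hus : u ∈ s := by by_contra h; simp [h] at hu
    have hvs : v ∈ s := by by_contra h; simp [h] at hv
    have h0 := hG.pos_dist_of_ne huv
    have h1 : G.dist u v ≠ 1 := fun h => hs u hus v hvs (SimpleGraph.dist_eq_one_iff_adj.1 h)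
    simp only [hus, hvs, if_true, max_self]
    omega

theorem betaB_eq_and_alphaNum_eq [DecidableEq V] [Nontrivial V] (hG : G.Connected) {m : ℕ}
    (hcost : ∀ f, IsIndepBroadcast G f → ∑ v, f v ≤ m) {s : Finset V}
    (hs : ∀ u ∈ s, ∀ v ∈ s, ¬ G.Adj u v) (hcard : s.card = m) :
    betaB G = m ∧ alphaNum G = m := by
  have hsum (t : Finset V) : ∑ v, (if v ∈ t then 1 else 0) = t.card := by simp
  refine ⟨IsGreatest.csSup_eq ⟨⟨_, isIndepBroadcast_indicator hG hs, (hsum s).trans hcard⟩, ?_⟩,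
    IsGreatest.csSup_eq ⟨⟨s, hs, hcard⟩, ?_⟩⟩
  · rintro _ ⟨f, hf, rfl⟩
    exact hcost f hf
  · rintro _ ⟨t, ht, rfl⟩
    exact hsum t ▸ hcost _ (isIndepBroadcast_indicator hG ht)

end Broadcast

section Circulant

variable {n a : ℕ} [NeZero n]

lemma circulantGraph_adj_iff {u v : Fin n} :
    (circulantGraph n a).Adj u v ↔ u ≠ v ∧ (v = u + 1 ∨ v = u + a ∨ u = v + 1 ∨ u = v + a) := by
  have key (x y : Fin n) (c : ℕ) : (x.val + c) % n = y.val ↔ y = x + c := by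
    rw [Fin.ext_iff, Fin.val_add, Fin.val_natCast, Nat.add_mod_mod, eq_comm]
  simp only [circulantGraph, SimpleGraph.fromRel_adj, key, Nat.cast_one, or_assoc]

lemma circulantGraph_adj_add_one (hn : 1 < n) (u : Fin n) : (circulantGraph n a).Adj u (u + 1) := by
  refine circulantGraph_adj_iff.2 ⟨fun h => ?_, Or.inl rfl⟩
  have h1 : (1 : Fin n) = 0 := by simpa using h.symm
  have := congrArg Fin.val h1
  rw [Fin.val_one', Nat.mod_eq_of_lt hn, Fin.val_zero] at this
  exact one_ne_zero this

lemma circulantGraph_adj_add_self (ha : (a : Fin n) ≠ 0) (u : Fin n) :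
    (circulantGraph n a).Adj u (u + a) :=
  circulantGraph_adj_iff.2 ⟨fun h => ha (by simpa using h.symm), Or.inr (Or.inl rfl)⟩

lemma circulantGraph_exists_walk_add (hn : 1 < n) (u : Fin n) (c : ℕ) :
    ∃ w : (circulantGraph n a).Walk u (u + c), w.length = c := by
  induction c with
  | zero => exact ⟨SimpleGraph.Walk.nil.copy rfl (by simp), by simp⟩
  | succ c ih =>
    obtain ⟨w, hw⟩ := ih
    exact ⟨(w.concat (circulantGraph_adj_add_one hn _)).copy rfl (by push_cast; rw [add_assoc]),
      by simp [hw]⟩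

lemma circulantGraph_dist_add_le (hn : 1 < n) (u : Fin n) (c : ℕ) :
    (circulantGraph n a).dist u (u + c) ≤ c := by
  obtain ⟨w, hw⟩ := circulantGraph_exists_walk_add hn u c
  exact (SimpleGraph.dist_le w).trans_eq hw

lemma circulantGraph_connected (hn : 1 < n) : (circulantGraph n a).Connected := by
  refine (SimpleGraph.connected_iff _).2 ⟨fun u v => ?_, ⟨0⟩⟩
  obtain ⟨w, -⟩ := circulantGraph_exists_walk_add (a := a) hn u (v - u).val
  rw [Fin.cast_val_eq_self, add_sub_cancel] at w
  exact w.reachable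

end Circulant

section Double

variable {a : ℕ} [NeZero a]

lemma one_lt_two_mul : 1 < 2 * a := by
  have := NeZero.pos a
  omega

lemma natCast_ne_zero_fin_two_mul : (a : Fin (2 * a)) ≠ 0 := by
  rw [Ne, Fin.ext_iff, Fin.val_natCast, Nat.mod_eq_of_lt (by have := NeZero.pos a; omega)]
  exact NeZero.ne a

lemma natCast_val_add_natCast (u : Fin (2 * a)) (c : ℕ) :
    (((u + c : Fin (2 * a)).val : ℕ) : ZMod a) = u.val + c := by
  rw [Fin.val_add, Fin.val_natCast, Nat.add_mod_mod, ← Nat.cast_add,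
    ZMod.natCast_eq_natCast_iff' _ _ a, Nat.mod_mod_of_dvd _ (dvd_mul_left a 2)]

lemma eq_add_or_eq_add_add_of_natCast_val_eq {u v : Fin (2 * a)} {c : ℕ}
    (h : (v.val : ZMod a) = u.val + c) : v = u + c ∨ v = u + c + a := by
  set w := v - (u + (c : Fin (2 * a)))
  have hv : v = u + c + w := (add_sub_cancel _ _).symm
  have hw : (w.val : ZMod a) = 0 := by
    have := natCast_val_add_natCast (u + (c : Fin (2 * a))) w.val
    rw [Fin.cast_val_eq_self, ← hv, h, natCast_val_add_natCast] at this
    simpa using this.symm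
  obtain ⟨k, hk⟩ := (ZMod.natCast_eq_zero_iff _ _).1 hw
  have hk2 : k < 2 := Nat.lt_of_mul_lt_mul_left (a := a) (by rw [← hk]; omega)
  interval_cases k
  · left
    rw [hv, show w = 0 from Fin.ext (by rw [hk, mul_zero]; rfl), add_zero]
  · right
    rw [hv, show w = a from Fin.ext (by rw [hk, mul_one, Fin.val_cast_of_lt (by omega)])]

lemma circulantGraph_dist_le_of_natCast_val_eq {u v : Fin (2 * a)} {c : ℕ}
    (h : (v.val : ZMod a) = u.val + c) : (circulantGraph (2 * a) a).dist u v ≤ c + 1 := by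
  rcases eq_add_or_eq_add_add_of_natCast_val_eq h with rfl | rfl
  · exact (circulantGraph_dist_add_le one_lt_two_mul u c).trans c.le_succ
  · calc _ ≤ (circulantGraph (2 * a) a).dist u (u + c) +
          (circulantGraph (2 * a) a).dist (u + c) (u + c + a) :=
          (circulantGraph_connected one_lt_two_mul).dist_triangle
      _ ≤ c + 1 := add_le_add (circulantGraph_dist_add_le one_lt_two_mul u c)
          (SimpleGraph.dist_eq_one_iff_adj.2
            (circulantGraph_adj_add_self natCast_ne_zero_fin_two_mul _)).le

lemma circulantGraph_dist_le (ha : 2 ≤ a) (u v : Fin (2 * a)) :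
    (circulantGraph (2 * a) a).dist u v ≤ a - 1 := by
  set d := (v - u).val
  have hv : v = u + d := by rw [Fin.cast_val_eq_self, add_sub_cancel]
  have hd : d < 2 * a := (v - u).isLt
  rcases lt_trichotomy d a with hlt | heq | hgt
  · exact hv ▸ (circulantGraph_dist_add_le one_lt_two_mul u d).trans (by omega)
  · rw [hv, heq, SimpleGraph.dist_eq_one_iff_adj.2
      (circulantGraph_adj_add_self natCast_ne_zero_fin_two_mul _)]
    omega
  · have hu : u = v + (2 * a - d : ℕ) := by
      rw [hv, add_assoc, ← Nat.cast_add, Nat.add_sub_cancel' hd.le, Fin.natCast_self, add_zero]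
    rw [SimpleGraph.dist_comm, hu]
    exact (circulantGraph_dist_add_le one_lt_two_mul v _).trans (by omega)

lemma circulantGraph_eccent_le (ha : 2 ≤ a) (u : Fin (2 * a)) :
    eccent (circulantGraph (2 * a) a) u ≤ a - 1 :=
  Finset.sup_le fun v _ => circulantGraph_dist_le ha u v

def broadcastArc (f : Fin (2 * a) → ℕ) (u : Fin (2 * a)) : Finset (ZMod a) :=
  (range (f u)).image fun t : ℕ => (u.val : ZMod a) + t

variable {f : Fin (2 * a) → ℕ}

lemma IsIndepBroadcast.apply_lt (ha : 2 ≤ a) (hf : IsIndepBroadcast (circulantGraph (2 * a) a) f)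
    (u : Fin (2 * a)) : f u < a :=
  (hf.1 u).trans_lt ((circulantGraph_eccent_le ha u).trans_lt (by omega))

lemma IsIndepBroadcast.card_broadcastArc (ha : 2 ≤ a)
    (hf : IsIndepBroadcast (circulantGraph (2 * a) a) f) (u : Fin (2 * a)) :
    (broadcastArc f u).card = f u := by
  have hfu := hf.apply_lt ha u
  rw [broadcastArc, card_image_of_injOn, card_range]
  intro s hs t ht hst
  simp only [coe_range, Set.mem_Iio, add_right_inj, ZMod.natCast_eq_natCast_iff' _ _ a] at hs ht hst
  rwa [Nat.mod_eq_of_lt (by omega), Nat.mod_eq_of_lt (by omega)] at hst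

lemma IsIndepBroadcast.disjoint_broadcastArc
    (hf : IsIndepBroadcast (circulantGraph (2 * a) a) f) {u v : Fin (2 * a)} (huv : u ≠ v) :
    Disjoint (broadcastArc f u) (broadcastArc f v) := by
  have key {x y : Fin (2 * a)} (hxy : x ≠ y) {s t : ℕ} (hs : s < f x) (ht : t < f y)
      (hts : t ≤ s) (h : (y.val : ZMod a) + t = x.val + s) : False := by
    have hd := circulantGraph_dist_le_of_natCast_val_eq (u := x) (v := y) (c := s - t)
      (by push_cast [Nat.cast_sub hts]; linear_combination h)
    have := hf.2 x y hxy (by omega) (by omega)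
    omega
  rw [disjoint_left]
  rintro z hzu hzv
  simp only [broadcastArc, mem_image, mem_range] at hzu hzv
  obtain ⟨s, hs, rfl⟩ := hzu
  obtain ⟨t, ht, hts⟩ := hzv
  rcases le_total t s with h | h
  · exact key huv hs ht h hts
  · exact key huv.symm ht hs h hts.symm

lemma IsIndepBroadcast.card_biUnion_broadcastArc (ha : 2 ≤ a)
    (hf : IsIndepBroadcast (circulantGraph (2 * a) a) f) :
    (univ.biUnion (broadcastArc f)).card = ∑ v, f v := by
  rw [card_biUnion fun u _ v _ huv => hf.disjoint_broadcastArc huv]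
  exact sum_congr rfl fun u _ => hf.card_broadcastArc ha u

lemma IsIndepBroadcast.sum_le (ha : 2 ≤ a) (hf : IsIndepBroadcast (circulantGraph (2 * a) a) f) :
    ∑ v, f v ≤ a :=
  hf.card_biUnion_broadcastArc ha ▸ (card_le_univ _).trans_eq (ZMod.card a)

lemma IsIndepBroadcast.pos_and_le_of_sum_eq (ha : 2 ≤ a)
    (hf : IsIndepBroadcast (circulantGraph (2 * a) a) f) (hsum : ∑ v, f v = a)
    {u : Fin (2 * a)} (hu : 0 < f u) :
    0 < f (u + f u + a) ∧ f (u + f u + a) ≤ f u := by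
  have hfu := hf.apply_lt ha u
  have hcover : univ.biUnion (broadcastArc f) = univ :=
    eq_univ_of_card _ (by rw [hf.card_biUnion_broadcastArc ha, hsum, ZMod.card])
  obtain ⟨v, -, hv⟩ := mem_biUnion.1 (hcover ▸ mem_univ ((u.val : ZMod a) + f u))
  obtain ⟨s, hs, hsv⟩ := mem_image.1 hv
  rw [mem_range] at hs
  have huv : u ≠ v := by
    rintro rfl
    rw [add_right_inj, ZMod.natCast_eq_natCast_iff' _ _ a, Nat.mod_eq_of_lt (by omega),
      Nat.mod_eq_of_lt hfu] at hsv
    omega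
  -- the point just before the end of the arc of `u` would otherwise lie in the arc of `v`
  obtain rfl : s = 0 := by
    by_contra hs0
    refine disjoint_left.1 (hf.disjoint_broadcastArc huv)
      (mem_image.2 ⟨f u - 1, mem_range.2 (by omega), rfl⟩) (mem_image.2 ⟨s - 1, mem_range.2 (by omega), ?_⟩)
    push_cast [Nat.cast_sub (Nat.one_le_iff_ne_zero.2 hs0), Nat.cast_sub hu]
    linear_combination hsv
  have hvu : (v.val : ZMod a) = u.val + f u := by simpa using hsv
  have hd := hf.2 u v huv hu hs
  rcases eq_add_or_eq_add_add_of_natCast_val_eq hvu with rfl | rfl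
  · have := circulantGraph_dist_add_le (a := a) one_lt_two_mul u (f u)
    omega
  · have := circulantGraph_dist_le_of_natCast_val_eq hvu
    exact ⟨hs, by omega⟩

lemma IsIndepBroadcast.apply_add_mul_eq (ha : 2 ≤ a)
    (hf : IsIndepBroadcast (circulantGraph (2 * a) a) f) (hsum : ∑ v, f v = a)
    {u : Fin (2 * a)} (hu : 0 < f u) (hmin : ∀ v, 0 < f v → f u ≤ f v) (k : ℕ) :
    f (u + (k * (f u + a) : ℕ)) = f u := by
  induction k with
  | zero => simp
  | succ k ih =>
    have hstep := hf.pos_and_le_of_sum_eq ha hsum (by rw [ih]; exact hu : 0 < f (u + (k * (f u + a) : ℕ)))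
    rw [ih] at hstep
    have heq : u + (k * (f u + a) : ℕ) + f u + a = u + ((k + 1) * (f u + a) : ℕ) := by
      push_cast; ring
    rw [← heq]
    exact le_antisymm hstep.2 (hmin _ hstep.1)

end Double

lemma exists_mul_add_two_pow_eq {p γ : ℕ} (hγ : 0 < γ) (hγp : γ < 2 ^ p) :
    ∃ k j : ℕ, k * (γ + 2 ^ p) = 2 ^ p + j * (2 * 2 ^ p) := by
  obtain ⟨e, c, ⟨m, rfl⟩, rfl⟩ := Nat.exists_eq_two_pow_mul_odd hγ.ne'
  have he : e < p := (Nat.pow_lt_pow_iff_right (by norm_num)).1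
    ((Nat.le_mul_of_pos_right _ (by omega)).trans_lt hγp)
  obtain ⟨q, rfl⟩ : ∃ q, p = e + 1 + q := ⟨p - e - 1, by omega⟩
  -- `k = 2 ^ (p - e)` turns the odd part of `γ` into an odd multiple of `2 ^ p`
  exact ⟨2 ^ (q + 1), m + 2 ^ q, by ring⟩

theorem IsIndepBroadcast.sum_le_two_pow_sub_one {p : ℕ} (hp : 1 ≤ p)
    {f : Fin (2 * 2 ^ p) → ℕ} (hf : IsIndepBroadcast (circulantGraph (2 * 2 ^ p) (2 ^ p)) f) :
    ∑ v, f v ≤ 2 ^ p - 1 := by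
  have ha : 2 ≤ 2 ^ p := by simpa using Nat.pow_le_pow_right two_pos hp
  refine Nat.le_sub_one_of_lt ((hf.sum_le ha).lt_of_ne fun hsum => ?_)
  obtain ⟨u, hu, hmin⟩ := (univ.filter fun v => 0 < f v).exists_min_image f <| by
    obtain ⟨v, -, hv⟩ := exists_ne_zero_of_sum_ne_zero (hsum.trans_ne (by positivity))
    exact ⟨v, mem_filter.2 ⟨mem_univ v, Nat.pos_of_ne_zero hv⟩⟩
  rw [mem_filter] at hu
  obtain ⟨k, j, hkj⟩ := exists_mul_add_two_pow_eq hu.2 (hf.apply_lt ha u)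
  have hk : u + (k * (f u + 2 ^ p) : ℕ) = u + (2 ^ p : ℕ) := by
    rw [hkj, Nat.cast_add, Nat.cast_mul, Fin.natCast_self, mul_zero, add_zero]
  have horbit := hf.apply_add_mul_eq ha hsum hu.2 (fun v hv => hmin v (mem_filter.2 ⟨mem_univ v, hv⟩)) k
  rw [hk] at horbit
  rcases hf.eq_zero_or_eq_zero_of_adj (circulantGraph_adj_add_self natCast_ne_zero_fin_two_mul u)
    with h | h <;> omega

lemma Nat.add_eq_or_add_eq_add_of_add_mod_eq {x c y n : ℕ} (hx : x < n) (hc : c ≤ n)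
    (h : (x + c) % n = y) : x + c = y ∨ x + c = y + n := by
  subst h
  rcases lt_or_ge (x + c) n with hlt | hge
  · exact Or.inl (Nat.mod_eq_of_lt hlt).symm
  · rw [Nat.mod_eq_sub_mod hge, Nat.mod_eq_of_lt (by omega)]
    omega

def evenOddVertex (a : ℕ) (i : Fin (a - 1)) : Fin (2 * a) :=
  ⟨if i < a / 2 then 2 * i else 2 * i + 1, by split_ifs <;> omega⟩

lemma evenOddVertex_injective (a : ℕ) : Function.Injective (evenOddVertex a) := by
  intro i j h
  have hv := congrArg Fin.val h
  simp only [evenOddVertex] at hv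
  ext
  split_ifs at hv <;> omega

lemma not_adj_evenOddVertex {a : ℕ} (ha : Even a) (i j : Fin (a - 1)) :
    ¬ (circulantGraph (2 * a) a).Adj (evenOddVertex a i) (evenOddVertex a j) := by
  obtain ⟨b, rfl⟩ := ha
  have hi := (evenOddVertex (b + b) i).isLt
  have hj := (evenOddVertex (b + b) j).isLt
  rintro ⟨hne, h⟩
  rw [Ne, Fin.ext_iff] at hne
  rcases h with (h | h) | (h | h) <;>
    rcases Nat.add_eq_or_add_eq_add_of_add_mod_eq (by assumption) (by omega) h with h | h <;>
    simp only [evenOddVertex] at h hne <;> split_ifs at h hne <;> omega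

lemma exists_indep_card_eq {a : ℕ} (ha : Even a) :
    ∃ s : Finset (Fin (2 * a)), (∀ u ∈ s, ∀ v ∈ s, ¬ (circulantGraph (2 * a) a).Adj u v) ∧
      s.card = a - 1 := by
  refine ⟨univ.image (evenOddVertex a), ?_, ?_⟩
  · simp only [mem_image, mem_univ, true_and]
    rintro _ ⟨i, rfl⟩ _ ⟨j, rfl⟩
    exact not_adj_evenOddVertex ha i j
  · rw [card_image_of_injective _ (evenOddVertex_injective a), card_univ, Fintype.card_fin]

theorem stmt4 (p : ℕ) (hp : 1 ≤ p) :
    betaB (circulantGraph (2 * 2 ^ p) (2 ^ p)) = 2 ^ p - 1 ∧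
    alphaNum (circulantGraph (2 * 2 ^ p) (2 ^ p)) = 2 ^ p - 1 := by
  have : Nontrivial (Fin (2 * 2 ^ p)) := Fin.nontrivial_iff_two_le.2 (Nat.le_mul_of_pos_right 2 (by positivity))
  obtain ⟨s, hs, hcard⟩ := exists_indep_card_eq (a := 2 ^ p) (Nat.even_pow.2 ⟨even_two, by omega⟩)
  exact betaB_eq_and_alphaNum_eq (circulantGraph_connected one_lt_two_mul)
    (fun _ hf => hf.sum_le_two_pow_sub_one hp) hs hcard
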